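/- (Sharpness of the constant π^α in the inverse theorem) Let α > 0, ε > 0 and let k_0 be a positive integer with μ_{k_0} > 0. Then the function f*(x) = e^{ik_0 x} belongs to S_{p,μ} and there exists n_0 ∈ ℕ such that for all n > n_0, ω_α(f*, π/n)_{p,μ} > ((π^α − ε)/n^α) Σ_{ν=1}^{n} (ν^α − (ν−1)^α) E_ν(f*)_{p,μ}. -/

import Mathlib

open MeasureTheory Filter Topology Asymptotics

noncomputable section

/-- The `k`-th Fourier coefficient of a (2π-periodic) function `f : ℝ → ℂ`:
`f̂(k) = (2π)⁻¹ ∫_0^{2π} f(t) e^{-ikt} dt`. -/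
def fcoeff (f : ℝ → ℂ) (k : ℤ) : ℂ :=
  (1 / (2 * (Real.pi : ℂ))) *
    ∫ t in (0:ℝ)..(2 * Real.pi), f t * Complex.exp (-(Complex.I * (k : ℂ) * (t : ℂ)))

/-- The admissible set defining the Luxemburg norm:
`{a > 0 : Σ_k μ_k |f̂(k)/a|^{p_k} ≤ 1}` (with the sum required to converge). -/
def lpSet (p μ : ℤ → ℝ) (f : ℝ → ℂ) : Set ℝ :=
  {a : ℝ | 0 < a ∧
    Summable (fun k : ℤ => μ k * (‖fcoeff f k‖ / a) ^ (p k)) ∧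
    ∑' k : ℤ, μ k * (‖fcoeff f k‖ / a) ^ (p k) ≤ 1}

/-- The Luxemburg norm `‖f‖_{p,μ}`. -/
def luxNorm (p μ : ℤ → ℝ) (f : ℝ → ℂ) : ℝ := sInf (lpSet p μ f)

/-- Membership in the space `S_{p,μ}`: `f` is 2π-periodic, integrable on a period, and
has finite Luxemburg norm (i.e. the admissible set is nonempty). -/
def MemS (p μ : ℤ → ℝ) (f : ℝ → ℂ) : Prop :=
  Function.Periodic f (2 * Real.pi) ∧ IntervalIntegrable f volume 0 (2 * Real.pi) ∧
    (lpSet p μ f).Nonempty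

/-- Generalized binomial coefficient `binom(α,j) = α(α−1)⋯(α−j+1)/j!`. -/
def gbinom (α : ℝ) (j : ℕ) : ℝ :=
  (∏ i ∈ Finset.range j, (α - (i : ℝ))) / (j.factorial : ℝ)

/-- Fractional difference `Δ_h^α f(x) = Σ_{j=0}^∞ (−1)^j binom(α,j) f(x − jh)`. -/
def fracDiff (α h : ℝ) (f : ℝ → ℂ) (x : ℝ) : ℂ :=
  ∑' j : ℕ, (-1 : ℂ) ^ j * (gbinom α j : ℂ) * f (x - (j : ℝ) * h)

/-- Modulus of smoothness `ω_α(f,δ)_{p,μ} = sup_{|h| ≤ δ} ‖Δ_h^α f‖_{p,μ}`. -/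
def modulus (p μ : ℤ → ℝ) (α : ℝ) (f : ℝ → ℂ) (δ : ℝ) : ℝ :=
  ⨆ h : {h : ℝ // |h| ≤ δ}, luxNorm p μ (fracDiff α h.1 f)

/-- Trigonometric polynomial of degree at most `n - 1` with coefficients `c`:
`Σ_{|k| ≤ n-1} c_k e^{ikx}`. -/
def trigSum (c : ℤ → ℂ) (n : ℕ) (x : ℝ) : ℂ :=
  ∑ k ∈ Finset.Ioo (-(n : ℤ)) (n : ℤ), c k * Complex.exp (Complex.I * (k : ℂ) * (x : ℂ))

/-- Best approximation `E_n(f)_{p,μ}` of `f` by trigonometric polynomials of degree `≤ n-1`. -/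
def bestApprox (p μ : ℤ → ℝ) (n : ℕ) (f : ℝ → ℂ) : ℝ :=
  sInf {r : ℝ | ∃ c : ℤ → ℂ, r = luxNorm p μ (fun x => f x - trigSum c n x)}

/-- `g` is the ψ-derivative of `f`: `ĝ(k) = f̂(k)/ψ_k` for `k ≠ 0` (and `ĝ(0) = 0`),
with `g` 2π-periodic and integrable on a period. -/
def IsPsiDeriv (ψ : ℤ → ℂ) (f g : ℝ → ℂ) : Prop :=
  Function.Periodic g (2 * Real.pi) ∧ IntervalIntegrable g volume 0 (2 * Real.pi) ∧
    fcoeff g 0 = 0 ∧ ∀ k : ℤ, k ≠ 0 → fcoeff g k = fcoeff f k / ψ k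

/-- Trigonometric polynomial of degree at most `n`: `τ_n(x) = Σ_{|k| ≤ n} c_k e^{ikx}`. -/
def trigPoly (c : ℤ → ℂ) (n : ℕ) (x : ℝ) : ℂ :=
  ∑ k ∈ Finset.Icc (-(n : ℤ)) (n : ℤ), c k * Complex.exp (Complex.I * (k : ℂ) * (x : ℂ))

/-- ψ-derivative of the trigonometric polynomial with coefficients `c`:
`τ_n^ψ(x) = Σ_{0<|k|≤n} (c_k/ψ_k) e^{ikx}`. -/
def trigPolyPsi (ψ : ℤ → ℂ) (c : ℤ → ℂ) (n : ℕ) (x : ℝ) : ℂ :=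
  ∑ k ∈ Finset.Icc (-(n : ℤ)) (n : ℤ),
    (if k = 0 then 0 else c k / ψ k) * Complex.exp (Complex.I * (k : ℂ) * (x : ℂ))

/-!
Everything about `f*(x) = e^{ik₀x}` is explicit. Its only nonzero Fourier coefficient is the
`k₀`-th, so `‖c f*‖_{p,μ} = |c| μ_{k₀}^{1/p_{k₀}} =: |c| M`; hence `E_ν(f*) ≤ M`, `E_ν(f*) = 0` for
`ν > k₀`, and the weighted sum telescopes to at most `k₀^α M`. Since `α > 0` the binomial series
`Σ (-1)^j binom(α,j) z^j = (1 - z)^α` converges absolutely on the closed unit disc, so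
`Δ_h^α f* = (1 - e^{-ik₀h})^α f*` and `ω_α(f*, π/n) ≥ |1 - e^{-ik₀π/n}|^α M ~ (k₀π/n)^α M`,
which eventually exceeds `(π^α - ε) k₀^α M / n^α`.
-/

lemma gbinom_succ (α : ℝ) (j : ℕ) :
    gbinom α (j + 1) = gbinom α j * ((α - j) / (j + 1)) := by
  rw [gbinom, gbinom, Finset.prod_range_succ, Nat.factorial_succ, div_mul_div_comm]
  push_cast
  ring

lemma ringChoose_ofReal_eq_gbinom (α : ℝ) (j : ℕ) : Ring.choose (α : ℂ) j = gbinom α j := by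
  rw [Ring.choose_eq_smul, ← Polynomial.aeval_eq_smeval, ← Polynomial.eval_map_algebraMap,
    descPochhammer_map, descPochhammer_eval_eq_prod_range]
  simp [gbinom, div_eq_inv_mul]

lemma summable_abs_gbinom {α : ℝ} (hα : 0 < α) : Summable fun j => |gbinom α j| := by
  obtain ⟨N, hN⟩ := exists_nat_gt α
  set u : ℕ → ℝ := fun j => ((j + N : ℕ) : ℝ) * |gbinom α (j + N)|
  -- Past `N > α`, `(j + 1) |b_{j+1}| = (j - α) |b_j|`, so `α |b_j|` telescopes.
  have htel : ∀ j, α * |gbinom α (j + N)| = u j - u (j + 1) := by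
    intro j
    have hj : α < ((j + N : ℕ) : ℝ) := by push_cast; linarith [(j.cast_nonneg : (0 : ℝ) ≤ j)]
    simp only [u, add_right_comm j 1 N, gbinom_succ, abs_mul, abs_div,
      abs_of_neg (sub_neg.2 hj), abs_of_pos (by positivity : (0 : ℝ) < ((j + N : ℕ) : ℝ) + 1)]
    push_cast
    field_simp
    ring
  refine (summable_nat_add_iff N).mp
    (summable_of_sum_range_le (c := u 0 / α) (fun j => abs_nonneg _) fun m => ?_)
  rw [le_div_iff₀' hα, Finset.mul_sum, Finset.sum_congr rfl fun j _ => htel j,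
    Finset.sum_range_sub']
  have : 0 ≤ u m := by positivity
  linarith

lemma hasSum_gbinom_mul_pow (α : ℝ) {z : ℂ} (hz : ‖z‖ < 1) :
    HasSum (fun j : ℕ => (-1 : ℂ) ^ j * gbinom α j * z ^ j) ((1 - z) ^ (α : ℂ)) := by
  have := (Complex.one_add_cpow_hasFPowerSeriesOnBall_zero (a := α)).hasSum (y := -z)
    (by rwa [← ENNReal.coe_one, Metric.eball_coe, Metric.mem_ball, dist_zero_right, norm_neg])
  rw [zero_add, ← sub_eq_add_neg] at this
  refine this.congr_fun fun j => ?_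
  rw [binomialSeries, FormalMultilinearSeries.ofScalars_apply_eq, ringChoose_ofReal_eq_gbinom,
    smul_eq_mul, neg_pow]
  ring

/-- The series converges absolutely on the closed disc, so the identity extends from the open
disc by continuity. -/
lemma tsum_gbinom_mul_pow {α : ℝ} (hα : 0 < α) {z : ℂ} (hz : ‖z‖ ≤ 1) :
    ∑' j : ℕ, (-1 : ℂ) ^ j * gbinom α j * z ^ j = (1 - z) ^ (α : ℂ) := by
  have hbound : ∀ j (w : ℂ), w ∈ Metric.closedBall (0 : ℂ) 1 →
      ‖(-1 : ℂ) ^ j * gbinom α j * w ^ j‖ ≤ |gbinom α j| := fun j w hw => by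
    simpa using mul_le_of_le_one_right (abs_nonneg _)
      (pow_le_one₀ (norm_nonneg w) (mem_closedBall_zero_iff.1 hw))
  have hseries : ContinuousOn (fun w : ℂ => ∑' j : ℕ, (-1 : ℂ) ^ j * gbinom α j * w ^ j)
      (Metric.closedBall 0 1) :=
    continuousOn_tsum (fun j => by fun_prop) (summable_abs_gbinom hα) hbound
  have hpow : ContinuousOn (fun w : ℂ => (1 - w) ^ (α : ℂ)) (Metric.closedBall 0 1) := by
    intro w hw
    have hre : 0 ≤ (1 - w).re := by
      simpa using (Complex.re_le_norm w).trans (mem_closedBall_zero_iff.1 hw)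
    exact ((Complex.continuousAt_cpow_const_of_re_pos (Or.inl hre) (by simpa using hα)).comp
      (continuousAt_const.sub continuousAt_id)).continuousWithinAt
  refine Set.EqOn.of_subset_closure (fun w hw => ?_) hseries hpow Metric.ball_subset_closedBall
    (closure_ball (0 : ℂ) one_ne_zero).symm.subset (mem_closedBall_zero_iff.2 hz)
  exact (hasSum_gbinom_mul_pow α (mem_ball_zero_iff.1 hw)).tsum_eq

lemma fcoeff_const_mul_exp (c : ℂ) (m k : ℤ) :
    fcoeff (fun x => c * Complex.exp (Complex.I * m * x)) k = if k = m then c else 0 := by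
  have hrw : ∀ t : ℝ, c * Complex.exp (Complex.I * m * t) * Complex.exp (-(Complex.I * k * t))
      = c * Complex.exp (Complex.I * (m - k) * t) := fun t => by
    rw [mul_assoc, ← Complex.exp_add]
    ring_nf
  rw [fcoeff, intervalIntegral.integral_congr fun t _ => hrw t,
    intervalIntegral.integral_const_mul]
  split_ifs with hkm
  · subst hkm
    simp only [sub_self, mul_zero, zero_mul, Complex.exp_zero, intervalIntegral.integral_const,
      sub_zero, Complex.real_smul, mul_one]
    push_cast
    field_simp
  · have hmk : Complex.I * (m - k) ≠ 0 :=
      mul_ne_zero Complex.I_ne_zero (sub_ne_zero.2 (by exact_mod_cast Ne.symm hkm))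
    have hperiod : Complex.exp (Complex.I * (m - k) * ((2 * Real.pi : ℝ) : ℂ)) = 1 := by
      rw [← Complex.exp_int_mul_two_pi_mul_I (m - k)]
      push_cast
      ring_nf
    rw [integral_exp_mul_complex hmk, hperiod]
    simp

lemma luxNorm_nonneg (p μ : ℤ → ℝ) (f : ℝ → ℂ) : 0 ≤ luxNorm p μ f :=
  Real.sInf_nonneg fun _ ha => ha.1.le

lemma bestApprox_nonneg (p μ : ℤ → ℝ) (n : ℕ) (f : ℝ → ℂ) : 0 ≤ bestApprox p μ n f :=
  Real.sInf_nonneg fun _ ⟨_, hr⟩ => hr ▸ luxNorm_nonneg p μ _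

lemma bestApprox_le_luxNorm_sub (p μ : ℤ → ℝ) (n : ℕ) (f : ℝ → ℂ) (c : ℤ → ℂ) :
    bestApprox p μ n f ≤ luxNorm p μ (fun x => f x - trigSum c n x) :=
  csInf_le ⟨0, fun _ ⟨_, hr⟩ => hr ▸ luxNorm_nonneg p μ _⟩ ⟨c, rfl⟩

lemma norm_exp_neg_I_mul_intCast_mul (m : ℤ) (h : ℝ) :
    ‖Complex.exp (-(Complex.I * m * h))‖ = 1 := by
  rw [Complex.norm_exp]
  simp

section Exponential

variable {p μ : ℤ → ℝ} {m : ℤ}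

lemma lpSet_const_mul_exp (hp : ∀ k, 0 < p k) (hμm : 0 < μ m) (c : ℂ) :
    lpSet p μ (fun x => c * Complex.exp (Complex.I * m * x))
      = {a | 0 < a ∧ ‖c‖ * μ m ^ (p m)⁻¹ ≤ a} := by
  ext a
  simp only [lpSet, Set.mem_ofPred_eq, and_congr_right_iff]
  intro ha
  have hterm : (fun k => μ k * (‖fcoeff (fun x => c * Complex.exp (Complex.I * m * x)) k‖ / a)
      ^ p k) = fun k => if k = m then (μ m ^ (p m)⁻¹ * ‖c‖ / a) ^ p m else 0 := by
    funext k
    rw [fcoeff_const_mul_exp]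
    split_ifs with hkm
    · subst hkm
      rw [mul_div_assoc, Real.mul_rpow (by positivity) (by positivity),
        Real.rpow_inv_rpow hμm.le (hp k).ne']
    · rw [norm_zero, zero_div, Real.zero_rpow (hp k).ne', mul_zero]
  have hle_one := Real.rpow_le_rpow_iff (x := μ m ^ (p m)⁻¹ * ‖c‖ / a) (by positivity)
    zero_le_one (hp m)
  rw [Real.one_rpow] at hle_one
  rw [hterm, tsum_ite_eq, hle_one, div_le_one ha, mul_comm]
  exact and_iff_right (summable_of_ne_finset_zero (s := {m}) fun k hk =>
    if_neg (by simpa using hk))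

lemma luxNorm_const_mul_exp (hp : ∀ k, 0 < p k) (hμm : 0 < μ m) (c : ℂ) :
    luxNorm p μ (fun x => c * Complex.exp (Complex.I * m * x)) = ‖c‖ * μ m ^ (p m)⁻¹ := by
  rw [luxNorm, lpSet_const_mul_exp hp hμm]
  rcases (by positivity : 0 ≤ ‖c‖ * μ m ^ (p m)⁻¹).eq_or_lt with h0 | hpos
  · simp_rw [← h0, and_iff_left_of_imp le_of_lt]
    exact csInf_Ioi
  · simp_rw [and_iff_right_of_imp hpos.trans_le]
    exact csInf_Ici

lemma luxNorm_exp (hp : ∀ k, 0 < p k) (hμm : 0 < μ m) :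
    luxNorm p μ (fun x : ℝ => Complex.exp (Complex.I * m * x)) = μ m ^ (p m)⁻¹ := by
  simpa using luxNorm_const_mul_exp hp hμm 1

lemma memS_exp (hp : ∀ k, 0 < p k) (hμm : 0 < μ m) :
    MemS p μ (fun x : ℝ => Complex.exp (Complex.I * m * x)) := by
  have hset := lpSet_const_mul_exp hp hμm 1
  simp only [one_mul, norm_one] at hset
  refine ⟨fun x => ?_, (by fun_prop : Continuous _).intervalIntegrable _ _,
    hset ▸ ⟨μ m ^ (p m)⁻¹, by positivity, le_rfl⟩⟩
  dsimp only
  rw [← mul_one (Complex.exp (Complex.I * m * x)), ← Complex.exp_int_mul_two_pi_mul_I m,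
    ← Complex.exp_add]
  push_cast
  ring_nf

lemma bestApprox_exp_le (hp : ∀ k, 0 < p k) (hμm : 0 < μ m) (n : ℕ) :
    bestApprox p μ n (fun x : ℝ => Complex.exp (Complex.I * m * x)) ≤ μ m ^ (p m)⁻¹ := by
  simpa [trigSum, luxNorm_exp hp hμm] using
    bestApprox_le_luxNorm_sub p μ n (fun x : ℝ => Complex.exp (Complex.I * m * x)) 0

lemma bestApprox_exp_eq_zero (hp : ∀ k, 0 < p k) (hμm : 0 < μ m) {n : ℕ} (hmn : |m| < n) :
    bestApprox p μ n (fun x : ℝ => Complex.exp (Complex.I * m * x)) = 0 := by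
  have hm : m ∈ Finset.Ioo (-(n : ℤ)) n := Finset.mem_Ioo.2 (abs_lt.1 hmn)
  have hzero : (fun x : ℝ => Complex.exp (Complex.I * m * x) - trigSum (Pi.single m 1) n x)
      = fun x : ℝ => 0 * Complex.exp (Complex.I * m * x) := by
    funext x
    simp [trigSum, Pi.single_apply, hm]
  have hle := bestApprox_le_luxNorm_sub p μ n
    (fun x : ℝ => Complex.exp (Complex.I * m * x)) (Pi.single m 1)
  rw [hzero, luxNorm_const_mul_exp hp hμm, norm_zero, zero_mul] at hle
  exact hle.antisymm (bestApprox_nonneg p μ n _)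

lemma fracDiff_exp {α : ℝ} (hα : 0 < α) (m : ℤ) (h : ℝ) :
    fracDiff α h (fun x : ℝ => Complex.exp (Complex.I * m * x))
      = fun x : ℝ => (1 - Complex.exp (-(Complex.I * m * h))) ^ (α : ℂ)
          * Complex.exp (Complex.I * m * x) := by
  funext x
  have hterm : ∀ j : ℕ, (-1 : ℂ) ^ j * gbinom α j * Complex.exp (Complex.I * m * ↑(x - j * h))
      = (-1 : ℂ) ^ j * gbinom α j * Complex.exp (-(Complex.I * m * h)) ^ j
          * Complex.exp (Complex.I * m * x) := fun j => by
    rw [← Complex.exp_nat_mul, mul_assoc _ (Complex.exp _), ← Complex.exp_add]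
    push_cast
    ring_nf
  rw [fracDiff, tsum_congr hterm, tsum_mul_right,
    tsum_gbinom_mul_pow hα (norm_exp_neg_I_mul_intCast_mul m h).le]

lemma luxNorm_fracDiff_exp {α : ℝ} (hp : ∀ k, 0 < p k) (hμm : 0 < μ m) (hα : 0 < α) (h : ℝ) :
    luxNorm p μ (fracDiff α h (fun x : ℝ => Complex.exp (Complex.I * m * x)))
      = ‖1 - Complex.exp (-(Complex.I * m * h))‖ ^ α * μ m ^ (p m)⁻¹ := by
  rw [fracDiff_exp hα, luxNorm_const_mul_exp hp hμm, Complex.norm_cpow_real]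

lemma luxNorm_fracDiff_exp_le_modulus {α : ℝ} (hp : ∀ k, 0 < p k) (hμm : 0 < μ m)
    (hα : 0 < α) {h δ : ℝ} (hh : |h| ≤ δ) :
    ‖1 - Complex.exp (-(Complex.I * m * h))‖ ^ α * μ m ^ (p m)⁻¹
      ≤ modulus p μ α (fun x : ℝ => Complex.exp (Complex.I * m * x)) δ := by
  have hbdd : BddAbove (Set.range fun h' : {h' : ℝ // |h'| ≤ δ} =>
      luxNorm p μ (fracDiff α h'.1 (fun x : ℝ => Complex.exp (Complex.I * m * x)))) := by
    refine ⟨2 ^ α * μ m ^ (p m)⁻¹, ?_⟩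
    rintro _ ⟨h', rfl⟩
    dsimp only
    rw [luxNorm_fracDiff_exp hp hμm hα]
    have h2 : ‖1 - Complex.exp (-(Complex.I * m * h'.1))‖ ≤ 2 := by
      refine (norm_sub_le _ _).trans ?_
      rw [norm_one, norm_exp_neg_I_mul_intCast_mul]
      norm_num
    gcongr
  rw [← luxNorm_fracDiff_exp hp hμm hα]
  exact le_ciSup hbdd ⟨h, hh⟩

end Exponential

lemma tendsto_nat_mul_norm_one_sub_exp (m : ℤ) (s : ℝ) :
    Tendsto (fun n : ℕ => (n : ℝ) * ‖1 - Complex.exp (-(Complex.I * m * ((s / n : ℝ) : ℂ)))‖)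
      atTop (𝓝 |m * s|) := by
  have hsin : ∀ y, Real.sin y = y * Real.sinc y := fun y => by
    rcases eq_or_ne y 0 with rfl | hy
    · simp
    · rw [Real.sinc_of_ne_zero hy, mul_div_cancel₀ _ hy]
  have hsinc : Tendsto (fun n : ℕ => |m * s| * |Real.sinc (-(m * s) / 2 / n)|) atTop
      (𝓝 |m * s|) := by
    simpa using tendsto_const_nhds.mul
      ((Real.continuous_sinc.tendsto 0).comp (tendsto_const_div_atTop_nhds_zero_nat _)).abs
  refine hsinc.congr' ((eventually_ne_atTop 0).mono fun n hn => ?_)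
  have hexp : 1 - Complex.exp (-(Complex.I * m * ((s / n : ℝ) : ℂ)))
      = -(Complex.exp (Complex.I * ((-(m * s / n) : ℝ) : ℂ)) - 1) := by
    push_cast
    ring_nf
  dsimp only
  rw [hexp, norm_neg, Complex.norm_exp_I_mul_ofReal_sub_one, hsin, Real.norm_eq_abs]
  have hn' : (n : ℝ) ≠ 0 := Nat.cast_ne_zero.2 hn
  set y := -(m * s) / 2 / n with hy
  have h2y : (n : ℝ) * |2 * y| = |m * s| := by
    rw [hy, show 2 * (-(m * s) / 2 / n) = -(m * s) / n by ring, abs_div, abs_neg, Nat.abs_cast,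
      mul_div_cancel₀ _ hn']
  rw [show -(m * s / n) / 2 = y by ring, ← mul_assoc, abs_mul (2 * y), ← mul_assoc, h2y]

lemma sub_one_rpow_le_rpow {α x : ℝ} (hα : 0 ≤ α) (hx : 1 ≤ x) : (x - 1) ^ α ≤ x ^ α :=
  Real.rpow_le_rpow (by linarith) (by linarith) hα

lemma sum_Icc_rpow_sub_rpow {α : ℝ} (hα : α ≠ 0) (k : ℕ) :
    ∑ ν ∈ Finset.Icc 1 k, ((ν : ℝ) ^ α - ((ν : ℝ) - 1) ^ α) = (k : ℝ) ^ α := by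
  induction k with
  | zero => simp [Real.zero_rpow hα]
  | succ k ih =>
    rw [Finset.sum_Icc_succ_top (by omega), ih, Nat.cast_succ, add_sub_cancel_right]
    ring

lemma sum_Icc_rpow_sub_rpow_mul_le {α M : ℝ} (hα : 0 < α) {E : ℕ → ℝ} {k n : ℕ} (hkn : k ≤ n)
    (hEM : ∀ ν, E ν ≤ M) (hE : ∀ ν, k < ν → E ν = 0) :
    ∑ ν ∈ Finset.Icc 1 n, ((ν : ℝ) ^ α - ((ν : ℝ) - 1) ^ α) * E ν ≤ (k : ℝ) ^ α * M := by
  obtain ⟨d, rfl⟩ := Nat.exists_eq_add_of_le hkn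
  induction d with
  | zero =>
    rw [add_zero, ← sum_Icc_rpow_sub_rpow hα.ne' k, Finset.sum_mul]
    refine Finset.sum_le_sum fun ν hν => mul_le_mul_of_nonneg_left (hEM ν) ?_
    exact sub_nonneg.2 (sub_one_rpow_le_rpow hα.le (by exact_mod_cast (Finset.mem_Icc.1 hν).1))
  | succ d ih =>
    rw [← add_assoc, Finset.sum_Icc_succ_top (by omega), hE _ (by omega), mul_zero, add_zero]
    exact ih (by omega)

lemma sum_Icc_rpow_sub_rpow_mul_nonneg {α : ℝ} (hα : 0 ≤ α) {E : ℕ → ℝ} (hE : ∀ ν, 0 ≤ E ν)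
    (n : ℕ) : 0 ≤ ∑ ν ∈ Finset.Icc 1 n, ((ν : ℝ) ^ α - ((ν : ℝ) - 1) ^ α) * E ν :=
  Finset.sum_nonneg fun ν hν => mul_nonneg
    (sub_nonneg.2 (sub_one_rpow_le_rpow hα (by exact_mod_cast (Finset.mem_Icc.1 hν).1))) (hE ν)

theorem stmt_16_general (K : ℝ) (p μ : ℤ → ℝ) (hp : ∀ k : ℤ, 1 ≤ p k ∧ p k ≤ K)
    (α ε : ℝ) (hα : 0 < α) (hε : 0 < ε)
    (k0 : ℕ) (hk0 : 0 < k0) (hμk0 : 0 < μ (k0 : ℤ)) (fstar : ℝ → ℂ)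
    (hfstar : ∀ x : ℝ, fstar x = Complex.exp (Complex.I * (k0 : ℂ) * (x : ℂ))) :
    MemS p μ fstar ∧ ∃ n0 : ℕ, ∀ n : ℕ, n0 < n →
      modulus p μ α fstar (Real.pi / n) >
        ((Real.pi ^ α - ε) / (n : ℝ) ^ α) *
          ∑ ν ∈ Finset.Icc 1 n,
            ((ν : ℝ) ^ α - ((ν : ℝ) - 1) ^ α) * bestApprox p μ ν fstar := by
  have hp0 : ∀ k, 0 < p k := fun k => one_pos.trans_le (hp k).1
  obtain rfl : fstar = fun x : ℝ => Complex.exp (Complex.I * ((k0 : ℤ) : ℂ) * x) :=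
    funext fun x => by simp [hfstar]
  refine ⟨memS_exp hp0 hμk0, ?_⟩
  set M := μ k0 ^ (p k0)⁻¹
  set c := max (Real.pi ^ α - ε) 0 * (k0 : ℝ) ^ α
  have hc : c < (|((k0 : ℤ) : ℝ) * Real.pi|) ^ α := by
    rw [Int.cast_natCast, abs_of_pos (by positivity), Real.mul_rpow (by positivity) Real.pi_pos.le,
      mul_comm]
    exact mul_lt_mul_of_pos_right (max_lt (by linarith) (by positivity)) (by positivity)
  obtain ⟨N, hN⟩ := eventually_atTop.1 ((((tendsto_nat_mul_norm_one_sub_exp k0 Real.pi).rpow_const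
    (Or.inr hα.le))).eventually (eventually_gt_nhds hc))
  refine ⟨max N k0, fun n hn => ?_⟩
  have hkn : k0 ≤ n := (le_max_right N k0).trans hn.le
  have hn0 : (0 : ℝ) < n := by exact_mod_cast hk0.trans_le hkn
  set S := ∑ ν ∈ Finset.Icc 1 n, ((ν : ℝ) ^ α - ((ν : ℝ) - 1) ^ α) *
    bestApprox p μ ν (fun x : ℝ => Complex.exp (Complex.I * ((k0 : ℤ) : ℂ) * x))
  have hS0 : 0 ≤ S := sum_Icc_rpow_sub_rpow_mul_nonneg hα.le (bestApprox_nonneg p μ · _) n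
  have hS : S ≤ (k0 : ℝ) ^ α * M := sum_Icc_rpow_sub_rpow_mul_le hα hkn
    (bestApprox_exp_le hp0 hμk0) fun ν hν =>
      bestApprox_exp_eq_zero hp0 hμk0 (by rw [Nat.abs_cast]; exact_mod_cast hν)
  calc (Real.pi ^ α - ε) / (n : ℝ) ^ α * S
      ≤ c * M / (n : ℝ) ^ α := by
        rw [div_mul_eq_mul_div, mul_assoc]
        exact div_le_div_of_nonneg_right ((mul_le_mul_of_nonneg_right (le_max_left _ 0) hS0).trans
          (mul_le_mul_of_nonneg_left hS (le_max_right _ 0))) (by positivity)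
    _ < ((n : ℝ) * ‖1 - Complex.exp (-(Complex.I * ((k0 : ℤ) : ℂ) * ((Real.pi / n : ℝ) : ℂ)))‖)
          ^ α * M / (n : ℝ) ^ α := by
        gcongr
        exact hN n ((le_max_left N k0).trans hn.le)
    _ = ‖1 - Complex.exp (-(Complex.I * ((k0 : ℤ) : ℂ) * ((Real.pi / n : ℝ) : ℂ)))‖ ^ α * M := by
        rw [Real.mul_rpow hn0.le (norm_nonneg _)]
        field_simp
    _ ≤ _ := luxNorm_fracDiff_exp_le_modulus hp0 hμk0 hα (abs_of_pos (by positivity)).le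

/-- sharpness of the constant `π^α`: for `f*(x) = e^{ik₀x}` with `μ_{k₀} > 0`,
`f* ∈ S_{p,μ}` and for all large `n`,
`ω_α(f*, π/n)_{p,μ} > ((π^α − ε)/n^α) Σ_{ν=1}^n (ν^α − (ν−1)^α) E_ν(f*)_{p,μ}`. -/
theorem stmt_16 (K : ℝ) (p μ : ℤ → ℝ) (hp : ∀ k : ℤ, 1 ≤ p k ∧ p k ≤ K)
    (hμ : ∀ k : ℤ, 0 ≤ μ k) (α ε : ℝ) (hα : 0 < α) (hε : 0 < ε)
    (k0 : ℕ) (hk0 : 0 < k0) (hμk0 : 0 < μ (k0 : ℤ)) (fstar : ℝ → ℂ)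
    (hfstar : ∀ x : ℝ, fstar x = Complex.exp (Complex.I * (k0 : ℂ) * (x : ℂ))) :
    MemS p μ fstar ∧ ∃ n0 : ℕ, ∀ n : ℕ, n0 < n →
      modulus p μ α fstar (Real.pi / n) >
        ((Real.pi ^ α - ε) / (n : ℝ) ^ α) *
          ∑ ν ∈ Finset.Icc 1 n,
            ((ν : ℝ) ^ α - ((ν : ℝ) - 1) ^ α) * bestApprox p μ ν fstar :=
  stmt_16_general K p μ hp α ε hα hε k0 hk0 hμk0 fstar hfstar
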